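/- There exists a constant C such that for all n ≥ 1, sup over x ∈ ℝ of |P(n² m_n^D ≥ x) − e^{−x}| ≤ C/n, where m_n^D is the minimum uniform spacing with survival function P(m_n^D ≥ x) = (1 − (n+1)x)^n on [0, 1/(n+1)]. -/

import Mathlib

/-! On the support `x ≤ n² / (n + 1)` put `a = 1 - (n + 1) x / n²` and `b = e^{-x/n}`. Then
`0 ≤ a ≤ b`, `bⁿ = e^{-x}`, the second-order Taylor bound gives `b - a ≤ (x² + x) / n²`, and
`x / n ≤ 1` gives `bⁿ⁻¹ ≤ e · e^{-x}`. Hence `|aⁿ - bⁿ| ≤ n (b - a) bⁿ⁻¹ ≤ 3 (x² + x) e^{-x} / n`,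
which is at most `6 / n` because `x² + x ≤ 2 (1 + x + x² / 2) ≤ 2 eˣ`. Beyond the support
`x > n² / (n + 1) ≥ n / 2`, so the remaining term `e^{-x} ≤ 2 / x` is at most `4 / n`. -/

open Real

theorem abs_pow_sub_pow_le_of_le {α : Type*} [CommRing α] [LinearOrder α] [IsOrderedRing α]
    {a b : α} (ha : 0 ≤ a) (hab : a ≤ b) (n : ℕ) :
    |a ^ n - b ^ n| ≤ (b - a) * (n : α) * b ^ (n - 1) := by
  have hb : 0 ≤ b := ha.trans hab
  simpa [abs_sub_comm a b, abs_of_nonneg (sub_nonneg.2 hab), abs_of_nonneg ha,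
    abs_of_nonneg hb, max_eq_right hab] using abs_pow_sub_pow_le a b n

theorem Real.exp_neg_sub_one_sub_le_sq {u : ℝ} (hu₀ : 0 ≤ u) (hu₁ : u ≤ 1) :
    exp (-u) - (1 - u) ≤ u ^ 2 := by
  have := abs_exp_sub_one_sub_id_le (x := -u) (by rwa [abs_neg, abs_of_nonneg hu₀])
  rw [neg_sq] at this
  linarith [le_abs_self (exp (-u) - 1 - -u)]

theorem Real.sq_add_self_mul_exp_neg_le_two {x : ℝ} (hx : 0 ≤ x) :
    (x ^ 2 + x) * exp (-x) ≤ 2 := by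
  rw [exp_neg, ← div_eq_mul_inv, div_le_iff₀ (exp_pos x)]
  linarith [quadratic_le_exp_of_nonneg hx]

theorem abs_one_sub_pow_sub_exp_neg_le {n : ℕ} (hn : 1 ≤ n) {x : ℝ} (hx : 0 ≤ x)
    (hsupp : x / (n : ℝ) ^ 2 ≤ 1 / ((n : ℝ) + 1)) :
    |(1 - ((n : ℝ) + 1) * (x / (n : ℝ) ^ 2)) ^ n - exp (-x)| ≤ 6 / (n : ℝ) := by
  have hn₀ : (0 : ℝ) < n := by exact_mod_cast hn
  set a := 1 - ((n : ℝ) + 1) * (x / (n : ℝ) ^ 2)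
  set b := exp (-(x / n))
  have hsupp' : ((n : ℝ) + 1) * x ≤ (n : ℝ) ^ 2 := by
    rwa [div_le_div_iff₀ (by positivity) (by positivity), one_mul, mul_comm] at hsupp
  have hu₀ : 0 ≤ x / n := by positivity
  have hu₁ : x / n ≤ 1 := by
    rw [div_le_one hn₀]; nlinarith
  have ha_eq : a = 1 - x / n - x / (n : ℝ) ^ 2 := by
    simp only [a]; field_simp; ring
  have ha₀ : 0 ≤ a := by
    simp only [a]
    rwa [sub_nonneg, ← le_div_iff₀' (by positivity)]
  have hab : a ≤ b := by
    have hexp := add_one_le_exp (-(x / n))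
    have hsq : 0 ≤ x / (n : ℝ) ^ 2 := by positivity
    rw [ha_eq]; linarith
  have hbn : b ^ n = exp (-x) := by
    rw [← exp_nat_mul]; congr 1; field_simp
  have hba : b - a ≤ (x ^ 2 + x) / (n : ℝ) ^ 2 := by
    have htaylor := exp_neg_sub_one_sub_le_sq hu₀ hu₁
    rw [ha_eq, add_div, ← div_pow]; linarith
  have hbpow : b ^ (n - 1) ≤ 3 * exp (-x) := by
    have hexp : ((n - 1 : ℕ) : ℝ) * -(x / n) ≤ 1 + -x := by
      rw [Nat.cast_sub hn, Nat.cast_one, sub_mul, one_mul, mul_neg, mul_div_cancel₀ x hn₀.ne']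
      linarith
    calc b ^ (n - 1) ≤ exp 1 * exp (-x) := by
          rw [← exp_nat_mul, ← exp_add]; exact exp_le_exp.2 hexp
      _ ≤ 3 * exp (-x) := by gcongr; linarith [exp_one_lt_d9]
  calc |a ^ n - exp (-x)| = |a ^ n - b ^ n| := by rw [hbn]
    _ ≤ (b - a) * n * b ^ (n - 1) := abs_pow_sub_pow_le_of_le ha₀ hab n
    _ ≤ (x ^ 2 + x) / (n : ℝ) ^ 2 * n * (3 * exp (-x)) := by gcongr
    _ = 3 * ((x ^ 2 + x) * exp (-x)) / n := by field_simp
    _ ≤ 3 * 2 / n := by gcongr; exact sq_add_self_mul_exp_neg_le_two hx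
    _ = 6 / n := by norm_num

theorem exp_neg_le_four_div_of_one_div_lt {n : ℕ} (hn : 1 ≤ n) {x : ℝ}
    (htail : 1 / ((n : ℝ) + 1) < x / (n : ℝ) ^ 2) : exp (-x) ≤ 4 / n := by
  have hn₀ : (0 : ℝ) < n := by exact_mod_cast hn
  have hn₁ : (1 : ℝ) ≤ n := by exact_mod_cast hn
  have hx : (n : ℝ) / 2 ≤ x := by
    rw [div_lt_div_iff₀ (by positivity) (by positivity), one_mul] at htail
    nlinarith
  have hx₀ : 0 < x := by linarith
  have hdecay := sq_add_self_mul_exp_neg_le_two hx₀.le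
  calc exp (-x) ≤ 2 / x := by
        rw [le_div_iff₀ hx₀]; nlinarith [exp_pos (-x)]
    _ ≤ 4 / n := by
        rw [div_le_div_iff₀ hx₀ hn₀]; linarith

theorem dirichlet_min_spacing_exponential_rate :
    ∃ C : ℝ, ∀ n : ℕ, 1 ≤ n → ∀ x : ℝ,
      |(if x < 0 then (1 : ℝ)
          else if x / (n : ℝ) ^ 2 ≤ 1 / ((n : ℝ) + 1)
            then (1 - ((n : ℝ) + 1) * (x / (n : ℝ) ^ 2)) ^ n else 0)
        - (if x < 0 then 1 else Real.exp (-x))| ≤ C / n := by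
  refine ⟨6, fun n hn x => ?_⟩
  split_ifs with hx hsupp
  · rw [sub_self, abs_zero]; positivity
  · exact abs_one_sub_pow_sub_exp_neg_le hn (not_lt.1 hx) hsupp
  · rw [zero_sub, abs_neg, abs_of_pos (exp_pos _)]
    calc exp (-x) ≤ 4 / n := exp_neg_le_four_div_of_one_div_lt hn (not_le.1 hsupp)
      _ ≤ 6 / n := by gcongr; norm_num
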